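/- Let q be a prime power and m ≥ n be nonnegative integers. Then Σ_{k=0}^{n} ζ_k^{m,n} = 1, where ζ_k^{m,n} = ζ_k^n ζ_k^m / (ζ_k^k q^{(m-k)(n-k)}) with ζ_r^n = ∏_{x=0}^{r-1}(1 - q^{-n+x}) and ζ_0^n = 1. -/

import Mathlib

/-- `ζ_r^n = ∏_{x=0}^{r-1} (1 - q^{-n+x})`, `ζ_0^n = 1`. -/
noncomputable def zeta (q : ℝ) (r n : ℕ) : ℝ :=
  ∏ x ∈ Finset.range r, (1 - q ^ ((x : ℤ) - (n : ℤ)))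

/-- `ζ_k^{m,n} = ζ_k^n ζ_k^m / (ζ_k^k q^{(m-k)(n-k)})`. -/
noncomputable def zeta2 (q : ℝ) (k m n : ℕ) : ℝ :=
  zeta q k n * zeta q k m / (zeta q k k * q ^ (((m : ℤ) - k) * ((n : ℤ) - k)))

open Finset

noncomputable def Fq (q : ℝ) (n : ℕ) : ℝ := ∏ j ∈ Finset.range n, (q ^ (j+1) - 1)

noncomputable def Gb (q : ℝ) (n k : ℕ) : ℝ := Fq q n / (Fq q k * Fq q (n - k))

lemma Fq_pos {q : ℝ} (hq : 1 < q) (n : ℕ) : 0 < Fq q n := by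
  apply Finset.prod_pos
  intro j _
  have : (1:ℝ) < q ^ (j+1) := one_lt_pow₀ hq (by omega : j+1 ≠ 0)
  linarith

lemma Fq_zero (q : ℝ) : Fq q 0 = 1 := by simp [Fq]

lemma Fq_succ (q : ℝ) (n : ℕ) : Fq q (n+1) = Fq q n * (q ^ (n+1) - 1) :=
  Finset.prod_range_succ _ _

lemma Gb_zero {q : ℝ} (hq : 1 < q) (n : ℕ) : Gb q n 0 = 1 := by
  rw [Gb, Fq_zero, Nat.sub_zero, one_mul, div_self (Fq_pos hq n).ne']

lemma Gb_self {q : ℝ} (hq : 1 < q) (n : ℕ) : Gb q n n = 1 := by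
  rw [Gb, Nat.sub_self, Fq_zero, mul_one, div_self (Fq_pos hq n).ne']

lemma Gb_pascal {q : ℝ} (hq : 1 < q) {n j : ℕ} (hj : j < n) :
    Gb q (n+1) (j+1) = Gb q n j + q ^ (j+1) * Gb q n (j+1) := by
  have h1 : n + 1 - (j+1) = n - j := by omega
  have e1 : Fq q (n+1) = Fq q n * (q ^ (n+1) - 1) := Fq_succ q n
  have e2 : Fq q (j+1) = Fq q j * (q ^ (j+1) - 1) := Fq_succ q j
  have e3 : Fq q (n-j) = Fq q (n-(j+1)) * (q ^ (n-j) - 1) := by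
    have h2 : n - j = (n - (j+1)) + 1 := by omega
    rw [h2]
    exact Fq_succ q (n-(j+1))
  have hpow : q ^ (j+1) * q ^ (n-j) = q ^ (n+1) := by
    rw [← pow_add]; congr 1; omega
  have hA : (0:ℝ) < q ^ (j+1) - 1 := by
    have := one_lt_pow₀ hq (by omega : j+1 ≠ 0); linarith
  have hB : (0:ℝ) < q ^ (n-j) - 1 := by
    have := one_lt_pow₀ hq (show n - j ≠ 0 by omega); linarith
  rw [Gb, Gb, Gb, h1, e1, e2, e3, ← hpow]
  have hj' := (Fq_pos hq j).ne'
  have hd' := (Fq_pos hq (n-(j+1))).ne'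
  field_simp
  ring

lemma key {q : ℝ} (hq : 1 < q) (X : ℝ) (n : ℕ) :
    ∑ k ∈ Finset.range (n+1), Gb q n k * ∏ i ∈ Finset.range k, (X - q^i) = X^n := by
  induction n with
  | zero => simp [Gb_zero hq]
  | succ n ih =>
    set E : ℝ := (∑ j ∈ Finset.range n, (Gb q n j * ∏ i ∈ Finset.range (j+1), (X - q^i)
        + q^(j+1) * Gb q n (j+1) * ∏ i ∈ Finset.range (j+1), (X - q^i)))
        + ((∏ i ∈ Finset.range (n+1), (X - q^i)) + 1) with hE
    have lhs_eq : ∑ k ∈ Finset.range (n+2), Gb q (n+1) k * ∏ i ∈ Finset.range k, (X - q^i) = E := by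
      rw [Finset.sum_range_succ' _ (n+1), Finset.sum_range_succ, Gb_self hq, Gb_zero hq, hE]
      simp only [Finset.prod_range_zero, one_mul, mul_one]
      rw [add_assoc]
      congr 1
      apply Finset.sum_congr rfl
      intro j hj
      rw [Gb_pascal hq (Finset.mem_range.mp hj)]
      ring
    have rhs_eq : X^(n+1) = E := by
      rw [pow_succ, mul_comm, ← ih, Finset.mul_sum]
      have : ∀ k ∈ Finset.range (n+1), X * (Gb q n k * ∏ i ∈ Finset.range k, (X - q^i))
          = Gb q n k * ∏ i ∈ Finset.range (k+1), (X - q^i)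
            + q^k * Gb q n k * ∏ i ∈ Finset.range k, (X - q^i) := by
        intro k _
        rw [Finset.prod_range_succ]
        ring
      rw [Finset.sum_congr rfl this, Finset.sum_add_distrib]
      rw [Finset.sum_range_succ _ n, Finset.sum_range_succ' _ n, Gb_self hq, Gb_zero hq, hE]
      simp only [Finset.prod_range_zero, one_mul, mul_one, pow_zero]
      rw [Finset.sum_add_distrib]
      ring
    rw [lhs_eq, rhs_eq]

lemma zeta_eq {q : ℝ} (hq : 0 < q) (r N : ℕ) :
    zeta q r N = q ^ (-((N:ℤ)*r)) * ∏ x ∈ Finset.range r, (q^N - q^x) := by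
  have hne : q ≠ 0 := hq.ne'
  have hfac : ∀ x : ℕ, (1 - q ^ ((x:ℤ) - N)) = q^(-(N:ℤ)) * (q^N - q^x) := by
    intro x
    rw [mul_sub, ← zpow_natCast q N, ← zpow_natCast q x, ← zpow_add₀ hne, ← zpow_add₀ hne,
      neg_add_cancel, zpow_zero]
    congr 2
    omega
  rw [zeta, Finset.prod_congr rfl (fun x _ => hfac x), Finset.prod_mul_distrib,
    Finset.prod_const, Finset.card_range, ← zpow_natCast (q ^ (-(N:ℤ))) r, ← zpow_mul,
    neg_mul]

lemma prod_sub_eq {q : ℝ} (hq : 1 < q) {k N : ℕ} (hk : k ≤ N) :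
    ∏ x ∈ Finset.range k, (q^N - q^x)
      = q ^ (∑ x ∈ Finset.range k, x) * (Fq q N / Fq q (N-k)) := by
  obtain ⟨a, rfl⟩ : ∃ a, N = a + k := ⟨N - k, by omega⟩
  have hfac : ∀ x ∈ Finset.range k, q^(a+k) - q^x
      = q^x * (q^(a + (k-1-x) + 1) - 1) := by
    intro x hx
    have hx' := Finset.mem_range.mp hx
    have h : a + k = x + (a + (k-1-x) + 1) := by omega
    rw [mul_sub, ← pow_add, mul_one, h]
  rw [Finset.prod_congr rfl hfac, Finset.prod_mul_distrib, Finset.prod_pow_eq_pow_sum]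
  congr 1
  rw [Finset.prod_range_reflect (fun i => q^(a + i + 1) - 1) k]
  have hsplit : Fq q (a+k) = Fq q a * ∏ i ∈ Finset.range k, (q^(a+i+1) - 1) := by
    rw [Fq, Fq, Finset.prod_range_add]
  rw [hsplit, Nat.add_sub_cancel]
  field_simp [(Fq_pos hq a).ne']

lemma An_eq_Gb_mul {q : ℝ} (hq : 1 < q) {k n : ℕ} (hk : k ≤ n) :
    ∏ x ∈ Finset.range k, (q^n - q^x)
      = Gb q n k * ∏ x ∈ Finset.range k, (q^k - q^x) := by
  rw [prod_sub_eq hq hk, prod_sub_eq hq (le_refl k), Gb, Nat.sub_self, Fq_zero, div_one]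
  field_simp [(Fq_pos hq k).ne', (Fq_pos hq (n-k)).ne']

/-- The rank probabilities of a totally random `m × n` matrix over `F_q`
sum to one: for a prime power `q` and `n ≤ m`, `Σ_{k=0}^{n} ζ_k^{m,n} = 1`. -/
theorem zeta2_sum_eq_one (q : ℕ) (hq : IsPrimePow q) (m n : ℕ) (hmn : n ≤ m) :
    ∑ k ∈ Finset.range (n + 1), zeta2 (q : ℝ) k m n = 1 := by
  have hq2 : 2 ≤ q := hq.two_le
  have hq1 : (1:ℝ) < (q:ℝ) := by exact_mod_cast hq2.trans_lt' one_lt_two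
  have hq0 : (0:ℝ) < (q:ℝ) := lt_trans one_pos hq1
  have hne : (q:ℝ) ≠ 0 := hq0.ne'
  have hterm : ∀ k ∈ Finset.range (n+1),
      zeta2 (q:ℝ) k m n = (q:ℝ) ^ (-((m:ℤ)*n))
        * (Gb (q:ℝ) n k * ∏ x ∈ Finset.range k, ((q:ℝ)^m - (q:ℝ)^x)) := by
    intro k hk
    have hkn : k ≤ n := Nat.lt_succ_iff.mp (Finset.mem_range.mp hk)
    have hBpos : 0 < ∏ x ∈ Finset.range k, ((q:ℝ)^k - (q:ℝ)^x) := by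
      apply Finset.prod_pos
      intro x hx
      have : (q:ℝ)^x < (q:ℝ)^k := pow_lt_pow_right₀ hq1 (Finset.mem_range.mp hx)
      linarith
    rw [zeta2, zeta_eq hq0, zeta_eq hq0, zeta_eq hq0, An_eq_Gb_mul hq1 hkn]
    have hz : (q:ℝ)^(-((n:ℤ)*k)) * (q:ℝ)^(-((m:ℤ)*k))
        = ((q:ℝ)^(-((k:ℤ)*k)) * (q:ℝ)^(((m:ℤ)-k)*((n:ℤ)-k))) * (q:ℝ)^(-((m:ℤ)*n)) := by
      rw [← zpow_add₀ hne, ← zpow_add₀ hne, ← zpow_add₀ hne]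
      congr 1
      ring
    set B := ∏ x ∈ Finset.range k, ((q:ℝ)^k - (q:ℝ)^x) with hB
    set A := ∏ x ∈ Finset.range k, ((q:ℝ)^m - (q:ℝ)^x) with hA
    set G := Gb (q:ℝ) n k with hG
    have hden : ((q:ℝ)^(-((k:ℤ)*k)) * B) * (q:ℝ)^(((m:ℤ)-k)*((n:ℤ)-k)) ≠ 0 :=
      mul_ne_zero (mul_ne_zero (zpow_ne_zero _ hne) hBpos.ne') (zpow_ne_zero _ hne)
    rw [div_eq_iff hden]
    linear_combination (G * B * A) * hz
  rw [Finset.sum_congr rfl hterm, ← Finset.mul_sum, key hq1 ((q:ℝ)^m) n, ← pow_mul,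
    ← zpow_natCast (q:ℝ) (m*n), ← zpow_add₀ hne]
  have h0 : (-((m:ℤ)*n) + ((m*n:ℕ):ℤ)) = 0 := by push_cast; ring
  rw [h0, zpow_zero]
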